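/- For every p > 0 one has p·cosh p − sinh p > 0, and the function Y₃²(p) = (2 sinh p − p cosh p)/√(p cosh p − sinh p) is strictly decreasing on (0, ∞), with Y₃²(p) → +∞ as p → 0⁺ and Y₃²(p) → −∞ as p → +∞. -/

import Mathlib

open Real Set Filter Topology

noncomputable def Y32 (p : ℝ) : ℝ :=
  (2 * Real.sinh p - p * Real.cosh p) / Real.sqrt (p * Real.cosh p - Real.sinh p)

/-!
With `f p = p cosh p - sinh p` one has `f 0 = 0` and `f' p = p sinh p`, so `f > 0`; the
numerator of `Y₃²` is `sinh p - f p`. The derivative of `Y₃²` has the sign of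
`2 f p - p² sinh p`, which vanishes at `0` and has derivative `-p² cosh p`. As `p → 0⁺`,
`√f → 0` while `2 f < p² sinh p` gives `sinh p / √f ≥ 1 / √p`. For `p ≥ 3`, `2 sinh p ≤ f`
gives `Y₃² ≤ -√f / 2`, and `f p ≥ p - 1`.
-/

lemma pos_of_hasDerivAt_pos_of_map_zero {h h' : ℝ → ℝ} (hzero : h 0 = 0)
    (hderiv : ∀ x, HasDerivAt h (h' x) x) (hpos : ∀ x, 0 < x → 0 < h' x) {p : ℝ}
    (hp : 0 < p) : 0 < h p := by
  have hmono : StrictMonoOn h (Ici 0) :=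
    strictMonoOn_of_hasDerivWithinAt_pos (convex_Ici 0)
      (fun x _ => (hderiv x).continuousAt.continuousWithinAt)
      (fun x _ => (hderiv x).hasDerivWithinAt)
      (fun x hx => hpos x (by simpa using hx))
  simpa [hzero] using hmono self_mem_Ici hp.le hp

lemma hasDerivAt_mul_cosh_sub_sinh (p : ℝ) :
    HasDerivAt (fun q => q * cosh q - sinh q) (p * sinh p) p := by
  refine (((hasDerivAt_id p).mul (hasDerivAt_cosh p)).sub (hasDerivAt_sinh p)).congr_deriv ?_
  simp

lemma mul_cosh_sub_sinh_pos {p : ℝ} (hp : 0 < p) : 0 < p * cosh p - sinh p :=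
  pos_of_hasDerivAt_pos_of_map_zero (by simp) hasDerivAt_mul_cosh_sub_sinh
    (fun x hx => mul_pos hx (sinh_pos_iff.2 hx)) hp

lemma two_mul_mul_cosh_sub_sinh_lt {p : ℝ} (hp : 0 < p) :
    2 * (p * cosh p - sinh p) < p ^ 2 * sinh p := by
  have hderiv (x : ℝ) : HasDerivAt (fun q => q ^ 2 * sinh q - 2 * (q * cosh q - sinh q))
      (x ^ 2 * cosh x) x := by
    refine (((hasDerivAt_pow 2 x).mul (hasDerivAt_sinh x)).sub
      ((hasDerivAt_mul_cosh_sub_sinh x).const_mul 2)).congr_deriv ?_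
    ring
  have := pos_of_hasDerivAt_pos_of_map_zero (by simp) hderiv
    (fun x hx => mul_pos (pow_pos hx 2) (cosh_pos x)) hp
  linarith

lemma Y32_eq_sub (p : ℝ) :
    Y32 p = sinh p / √(p * cosh p - sinh p) - √(p * cosh p - sinh p) := by
  rw [Y32, show 2 * sinh p - p * cosh p = sinh p - (p * cosh p - sinh p) by ring, sub_div,
    div_sqrt]

lemma hasDerivAt_Y32 {p : ℝ} (hp : 0 < p) :
    HasDerivAt Y32 (cosh p * (2 * (p * cosh p - sinh p) - p ^ 2 * sinh p) /
      (2 * (p * cosh p - sinh p) * √(p * cosh p - sinh p))) p := by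
  have hf := mul_cosh_sub_sinh_pos hp
  have hsqrt : √(p * cosh p - sinh p) ≠ 0 := (sqrt_pos.2 hf).ne'
  have hnum : HasDerivAt (fun q => 2 * sinh q - q * cosh q) (cosh p - p * sinh p) p := by
    refine (((hasDerivAt_sinh p).const_mul 2).sub
      ((hasDerivAt_id p).mul (hasDerivAt_cosh p))).congr_deriv ?_
    simp only [id_eq, one_mul]
    ring
  refine (hnum.div ((hasDerivAt_mul_cosh_sub_sinh p).sqrt hf.ne') hsqrt).congr_deriv ?_
  have hs2 : √(p * cosh p - sinh p) ^ 2 = p * cosh p - sinh p := sq_sqrt hf.le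
  set s := √(p * cosh p - sinh p)
  rw [← hs2]
  field_simp
  linear_combination (-2 * p * sinh p) * hs2

lemma Y32_strictAntiOn : StrictAntiOn Y32 (Ioi 0) := by
  refine strictAntiOn_of_hasDerivWithinAt_neg (convex_Ioi 0)
    (fun x hx => (hasDerivAt_Y32 hx).continuousAt.continuousWithinAt)
    (fun x hx => (hasDerivAt_Y32 (by simpa using hx)).hasDerivWithinAt) fun x hx => ?_
  rw [interior_Ioi] at hx
  have hf := mul_cosh_sub_sinh_pos hx
  have hg := two_mul_mul_cosh_sub_sinh_lt hx
  exact div_neg_of_neg_of_pos (mul_neg_of_pos_of_neg (cosh_pos x) (by linarith))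
    (by positivity)

lemma sqrt_inv_le_sinh_div_sqrt {p : ℝ} (hp : 0 < p) :
    √p⁻¹ ≤ sinh p / √(p * cosh p - sinh p) := by
  have hsinh : p ≤ sinh p := self_le_sinh_iff.2 hp.le
  have hf := mul_cosh_sub_sinh_pos hp
  have hle : p * cosh p - sinh p ≤ p * sinh p ^ 2 := by
    nlinarith [two_mul_mul_cosh_sub_sinh_lt hp, mul_le_mul_of_nonneg_right hsinh (by positivity :
      0 ≤ p * sinh p)]
  have hsqrt : √(p * cosh p - sinh p) ≤ √p * sinh p := by
    calc √(p * cosh p - sinh p) ≤ √(p * sinh p ^ 2) := sqrt_le_sqrt hle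
      _ = √p * sinh p := by rw [sqrt_mul hp.le, sqrt_sq (by linarith)]
  calc √p⁻¹ = sinh p / (√p * sinh p) := by
        rw [sqrt_inv]; field_simp [(show 0 < sinh p by linarith).ne']
    _ ≤ sinh p / √(p * cosh p - sinh p) :=
        div_le_div_of_nonneg_left (by linarith) (sqrt_pos.2 hf) hsqrt

lemma tendsto_Y32_nhdsGT_zero : Tendsto Y32 (𝓝[>] 0) atTop := by
  have hsqrt : Tendsto (fun p => √(p * cosh p - sinh p)) (𝓝[>] 0) (𝓝 0) :=
    ((by fun_prop : Continuous fun p => √(p * cosh p - sinh p)).tendsto' 0 0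
      (by simp)).mono_left nhdsWithin_le_nhds
  have hquot : Tendsto (fun p => sinh p / √(p * cosh p - sinh p)) (𝓝[>] 0) atTop :=
    tendsto_atTop_mono' _ (eventually_mem_nhdsWithin.mono fun p hp => sqrt_inv_le_sinh_div_sqrt hp)
      (tendsto_sqrt_atTop.comp tendsto_inv_nhdsGT_zero)
  exact (hquot.atTop_add hsqrt.neg).congr fun p => ((Y32_eq_sub p).trans (sub_eq_add_neg _ _)).symm

lemma Y32_le_neg_sqrt_div_two {p : ℝ} (hp : 3 ≤ p) :
    Y32 p ≤ -(√(p * cosh p - sinh p) / 2) := by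
  have hf := mul_cosh_sub_sinh_pos (by linarith : 0 < p)
  have hsinh : 2 * sinh p ≤ p * cosh p - sinh p := by
    nlinarith [sinh_lt_cosh p, cosh_pos p]
  have hquot : sinh p / √(p * cosh p - sinh p) ≤ √(p * cosh p - sinh p) / 2 := by
    rw [div_le_iff₀ (sqrt_pos.2 hf), div_mul_eq_mul_div, mul_self_sqrt hf.le]
    linarith
  rw [Y32_eq_sub]
  linarith

lemma sub_one_le_mul_cosh_sub_sinh {p : ℝ} (hp : 1 ≤ p) : p - 1 ≤ p * cosh p - sinh p := by
  nlinarith [one_le_cosh p, sinh_lt_cosh p]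

lemma tendsto_Y32_atTop : Tendsto Y32 atTop atBot := by
  have hf : Tendsto (fun p => p * cosh p - sinh p) atTop atTop :=
    tendsto_atTop_mono' _ ((eventually_ge_atTop 1).mono fun p => sub_one_le_mul_cosh_sub_sinh)
      (tendsto_atTop_add_const_right _ (-1) tendsto_id)
  exact tendsto_atBot_mono' _ ((eventually_ge_atTop 3).mono fun p => Y32_le_neg_sqrt_div_two)
    (tendsto_neg_atTop_atBot.comp ((tendsto_sqrt_atTop.comp hf).atTop_div_const two_pos))

/-- For every `p > 0` one has `p·cosh p − sinh p > 0`, and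
`Y₃²(p) = (2 sinh p − p cosh p)/√(p cosh p − sinh p)` is strictly decreasing on
`(0, ∞)`, tending to `+∞` as `p → 0⁺` and to `−∞` as `p → +∞`. -/
theorem Y32_strictAnti :
    (∀ p : ℝ, 0 < p → 0 < p * Real.cosh p - Real.sinh p) ∧
    StrictAntiOn Y32 (Set.Ioi 0) ∧
    Tendsto Y32 (nhdsWithin 0 (Set.Ioi 0)) atTop ∧
    Tendsto Y32 atTop atBot :=
  ⟨fun _ => mul_cosh_sub_sinh_pos, Y32_strictAntiOn, tendsto_Y32_nhdsGT_zero, tendsto_Y32_atTop⟩
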